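/- arXiv:1307.7635 — 2 statements merged into one kernel-verified Lean document; each statement's English description precedes it below -/
import Mathlib

section
/- Let A be an algebra and let N_alt(A) be its generalized alternative nucleus, equipped with the bracket [a,b] = ab − ba. Then for all a, b, c ∈ N_alt(A) the Malcev identity holds: [J(a,b,c), a] = J(a, b, [a,c]), where J(a,b,c) = [[a,b],c] + [[b,c],a] + [[c,a],b]. In other words, N_alt(A) is a Malcev algebra under the commutator bracket. -/
/-- The commutator `[x,y] = xy - yx`. -/
def acomm {A : Type*} [NonUnitalNonAssocRing A] (x y : A) : A := x * y - y * x

/-- The associator `(x,y,z) = (xy)z - x(yz)`. -/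
def aassoc {A : Type*} [NonUnitalNonAssocRing A] (x y z : A) : A := (x * y) * z - x * (y * z)

/-- The generalized alternative nucleus
`N_alt(A) = { a | (a,x,y) = -(x,a,y) = (x,y,a) for all x, y }`. -/
def genAltNucleus (A : Type*) [NonUnitalNonAssocRing A] : Set A :=
  {a | ∀ x y : A, aassoc a x y = - aassoc x a y ∧ aassoc x y a = - aassoc x a y}

/-- The Jacobian `J(a,b,c) = [[a,b],c] + [[b,c],a] + [[c,a],b]`. -/
def jac {A : Type*} [NonUnitalNonAssocRing A] (a b c : A) : A :=
  acomm (acomm a b) c + acomm (acomm b c) a + acomm (acomm c a) b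

/-!
The associator changes sign under every transposition of its arguments as soon as two of them
lie in `N_alt(A)`, so for `a, b ∈ N_alt(A)` expanding the Jacobian into associators gives
`J(a, b, d) = 6 (a, b, d)` for every `d`. The Malcev identity therefore reduces to the Moufang-type
identity `(a, b, [a, c]) = [(a, b, c), a]`, which follows from instances of the Teichmüller identity
as in alternative algebras. The defining relations only give `(a, a, y) = -(a, a, y)`, not
`(a, a, y) = 0`, so the Moufang-type identities are proved after multiplication by `2`; the
factor `6` leaves room for that.
-/

section

variable {A : Type*} [NonUnitalNonAssocRing A]

theorem jac_eq_alternating_sum_aassoc (x y z : A) :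
    jac x y z = aassoc x y z - aassoc y x z + aassoc y z x - aassoc z y x + aassoc z x y
      - aassoc x z y := by
  simp only [jac, acomm, aassoc, mul_sub, sub_mul]
  abel

theorem aassoc_teichmuller (w x y z : A) :
    aassoc (w * x) y z - aassoc w (x * y) z + aassoc w x (y * z) =
      w * aassoc x y z + aassoc w x y * z := by
  simp only [aassoc, mul_sub, sub_mul]
  abel

end

namespace genAltNucleus

variable {A : Type*} [NonUnitalNonAssocRing A] {a b c : A}

theorem aassoc_left (ha : a ∈ genAltNucleus A) (x y : A) : aassoc a x y = -aassoc x a y :=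
  (ha x y).1

theorem aassoc_middle (ha : a ∈ genAltNucleus A) (x y : A) : aassoc x a y = -aassoc a x y := by
  rw [aassoc_left ha, neg_neg]

theorem aassoc_right (ha : a ∈ genAltNucleus A) (x y : A) : aassoc x y a = -aassoc x a y :=
  (ha x y).2

theorem aassoc_right_eq_left (ha : a ∈ genAltNucleus A) (x y : A) :
    aassoc x y a = aassoc a x y := by
  rw [aassoc_right ha, aassoc_middle ha, neg_neg]

theorem two_smul_aassoc_self (ha : a ∈ genAltNucleus A) (y : A) : (2 : ℤ) • aassoc a a y = 0 := by
  linear_combination (norm := module) aassoc_left ha a y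

theorem two_smul_aassoc_self_mul (ha : a ∈ genAltNucleus A) (y z : A) :
    (2 : ℤ) • (aassoc a a y * z) = 0 := by
  rw [← smul_mul_assoc, two_smul_aassoc_self ha, zero_mul]

theorem jac_eq_six_smul_aassoc (ha : a ∈ genAltNucleus A) (hb : b ∈ genAltNucleus A) (d : A) :
    jac a b d = (6 : ℤ) • aassoc a b d := by
  rw [jac_eq_alternating_sum_aassoc, aassoc_middle ha b d, aassoc_right ha b d,
    aassoc_middle ha b d, aassoc_right ha d b, aassoc_middle ha d b, aassoc_right hb a d]
  module

theorem aassoc_teichmuller_self (ha : a ∈ genAltNucleus A) (b c : A) :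
    aassoc a (a * b) c - aassoc a a (b * c) + aassoc a b (c * a) =
      a * aassoc a b c + aassoc a b c * a := by
  have h := aassoc_teichmuller a b c a
  rwa [aassoc_right_eq_left ha (a * b) c, aassoc_right_eq_left ha a (b * c),
    aassoc_right_eq_left ha b c] at h

theorem two_smul_aassoc_left_mul_eq_middle_left_mul (ha : a ∈ genAltNucleus A)
    (hb : b ∈ genAltNucleus A) (c : A) :
    (2 : ℤ) • aassoc a b (a * c) = (2 : ℤ) • aassoc a (a * b) c := by
  have hbc := aassoc_teichmuller a a b c
  have hcb : -aassoc (a * a) b c + aassoc a b (a * c) + aassoc a a (c * b) =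
      -(a * aassoc a b c) + aassoc a a c * b := by
    have h := aassoc_teichmuller a a c b
    rwa [aassoc_right hb (a * a) c, aassoc_right hb a (a * c), aassoc_right hb a c, mul_neg,
      sub_neg_eq_add] at h
  linear_combination (norm := module) (2 : ℤ) • (hbc + hcb) - two_smul_aassoc_self ha (b * c)
    - two_smul_aassoc_self ha (c * b) + two_smul_aassoc_self_mul ha b c
    + two_smul_aassoc_self_mul ha c b

theorem two_smul_aassoc_middle_left_mul (ha : a ∈ genAltNucleus A) (hb : b ∈ genAltNucleus A)
    (hc : c ∈ genAltNucleus A) :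
    (2 : ℤ) • aassoc a (a * b) c = (2 : ℤ) • (aassoc a b c * a) := by
  have hcab : aassoc a b (a * c) + aassoc a b (c * a) - aassoc a (a * b) c =
      a * aassoc a b c + aassoc a a c * b := by
    have h := aassoc_teichmuller a c a b
    rw [aassoc_middle ha (a * c) b, aassoc_right hb a (a * c), aassoc_right hb a (c * a),
      aassoc_middle ha c b, aassoc_right hb a c, aassoc_right_eq_left ha a c] at h
    simp only [neg_neg] at h
    linear_combination (norm := module) h - aassoc_right hc a (a * b)
  linear_combination (norm := module) (2 : ℤ) • (aassoc_teichmuller_self ha b c - hcab)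
    + two_smul_aassoc_left_mul_eq_middle_left_mul ha hb c + two_smul_aassoc_self ha (b * c)
    - two_smul_aassoc_self_mul ha c b

theorem two_smul_aassoc_left_mul (ha : a ∈ genAltNucleus A) (hb : b ∈ genAltNucleus A)
    (hc : c ∈ genAltNucleus A) : (2 : ℤ) • aassoc a b (a * c) = (2 : ℤ) • (aassoc a b c * a) :=
  (two_smul_aassoc_left_mul_eq_middle_left_mul ha hb c).trans
    (two_smul_aassoc_middle_left_mul ha hb hc)

theorem two_smul_aassoc_right_mul (ha : a ∈ genAltNucleus A) (hb : b ∈ genAltNucleus A)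
    (hc : c ∈ genAltNucleus A) : (2 : ℤ) • aassoc a b (c * a) = (2 : ℤ) • (a * aassoc a b c) := by
  linear_combination (norm := module) (2 : ℤ) • aassoc_teichmuller_self ha b c
    - two_smul_aassoc_middle_left_mul ha hb hc + two_smul_aassoc_self ha (b * c)

theorem two_smul_aassoc_acomm (ha : a ∈ genAltNucleus A) (hb : b ∈ genAltNucleus A)
    (hc : c ∈ genAltNucleus A) :
    (2 : ℤ) • aassoc a b (acomm a c) = (2 : ℤ) • acomm (aassoc a b c) a := by
  have h : aassoc a b (acomm a c) = aassoc a b (a * c) - aassoc a b (c * a) := by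
    simp only [acomm, aassoc, mul_sub]
    abel
  rw [h, acomm, smul_sub, smul_sub, two_smul_aassoc_left_mul ha hb hc,
    two_smul_aassoc_right_mul ha hb hc]

end genAltNucleus

/-- On the generalized alternative nucleus the commutator bracket satisfies the Malcev
identity `[J(a,b,c),a] = J(a,b,[a,c])`: `N_alt(A)` is a Malcev algebra. -/
theorem malcev_identity_genAltNucleus {A : Type*} [NonUnitalNonAssocRing A] (a b c : A)
    (ha : a ∈ genAltNucleus A) (hb : b ∈ genAltNucleus A) (hc : c ∈ genAltNucleus A) :
    acomm (jac a b c) a = jac a b (acomm a c) := by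
  calc acomm (jac a b c) a = (3 : ℤ) • (2 : ℤ) • acomm (aassoc a b c) a := by
        rw [genAltNucleus.jac_eq_six_smul_aassoc ha hb, acomm, acomm, smul_mul_assoc,
          mul_smul_comm, ← smul_sub, smul_smul]
        norm_num
    _ = (3 : ℤ) • (2 : ℤ) • aassoc a b (acomm a c) := by
        rw [genAltNucleus.two_smul_aassoc_acomm ha hb hc]
    _ = jac a b (acomm a c) := by
        rw [genAltNucleus.jac_eq_six_smul_aassoc ha hb, smul_smul]
        norm_num
end

section
/- Let (G, σ, ρ) be a group with triality and M(G) = { P(g) | g ∈ G } with product x * y = ρ(x)⁻¹ · y · ρ²(x)⁻¹. Then (M(G), *) satisfies the left Moufang identity: for all x, y, z ∈ M(G), x * (y * (x * z)) = ((x * y) * x) * z. Hence (M(G), *) is a Moufang loop. -/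
/-- `P(g) = g·σ(g)⁻¹`. -/
def trialityP {G : Type*} [Group G] (σ : G →* G) (g : G) : G := g * (σ g)⁻¹

/-- `M(G) = { P(g) | g ∈ G }`. -/
def trialityM {G : Type*} [Group G] (σ : G →* G) : Set G := Set.range (trialityP σ)

/-- The Moufang product `x * y = ρ(x)⁻¹ · y · ρ²(x)⁻¹` on `M(G)`. -/
def trialityMul {G : Type*} [Group G] (ρ : G →* G) (x y : G) : G :=
  (ρ x)⁻¹ * y * (ρ (ρ x))⁻¹

/-!
Writing `L_x z = ρ(x)⁻¹ z ρ²(x)⁻¹`, the left side is `L_x L_y L_x z = L_{xyx} z`, since the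
factors on either side of `z` are palindromic. So it suffices that `(x * y) * x = xyx` in `G`.
Expanding, the factor `ρ²(x) x ρ(x)` appears in the middle and vanishes by the triality relation
for `x` (rotated by `ρ²`); what is left is `x ρ(y)⁻¹ ρ²(y)⁻¹ x`, and `ρ(y)⁻¹ ρ²(y)⁻¹ = y` is the
triality relation for `y⁻¹`, which lies in `M(G)` because `P(g)⁻¹ = P(σ g)`.
-/

theorem inv_trialityP {G : Type*} [Group G] (σ : G →* G) (hσ : ∀ g, σ (σ g) = g) (g : G) :
    (trialityP σ g)⁻¹ = trialityP σ (σ g) := by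
  simp [trialityP, hσ]

section

variable {G : Type*} [Group G] (ρ : G →* G)

theorem trialityMul_trialityMul_trialityMul (x y z : G) :
    trialityMul ρ x (trialityMul ρ y (trialityMul ρ x z)) = trialityMul ρ (x * y * x) z := by
  simp only [trialityMul, map_mul]
  group

theorem trialityMul_trialityMul_self_eq (hρ : ∀ g, ρ (ρ (ρ g)) = g) {x y : G}
    (hx : x * ρ x * ρ (ρ x) = 1) (hy : y⁻¹ * ρ y⁻¹ * ρ (ρ y⁻¹) = 1) :
    trialityMul ρ (trialityMul ρ x y) x = x * y * x := by
  have hx' : ρ (ρ x) * x * ρ x = 1 := by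
    simpa only [map_mul, hρ, map_one] using congrArg (fun g => ρ (ρ g)) hx
  have hy' : y = (ρ y)⁻¹ * (ρ (ρ y))⁻¹ := by
    rw [map_inv, map_inv, mul_assoc] at hy
    exact inv_mul_eq_one.mp hy
  calc trialityMul ρ (trialityMul ρ x y) x
      = x * (ρ y)⁻¹ * (ρ (ρ x) * x * ρ x) * (ρ (ρ y))⁻¹ * x := by
        simp only [trialityMul, map_mul, map_inv, hρ]
        group
    _ = x * y * x := by
        conv_rhs => rw [hy']
        rw [hx', mul_one, mul_assoc x]

end

theorem trialityM_left_moufang_general {G : Type*} [Group G] (σ ρ : G →* G)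
    (hσ : ∀ g, σ (σ g) = g) (hρ : ∀ g, ρ (ρ (ρ g)) = g)
    (htri : ∀ g, trialityP σ g * ρ (trialityP σ g) * ρ (ρ (trialityP σ g)) = 1) :
    ∀ x ∈ trialityM σ, ∀ y ∈ trialityM σ, ∀ z ∈ trialityM σ,
      trialityMul ρ x (trialityMul ρ y (trialityMul ρ x z)) =
        trialityMul ρ (trialityMul ρ (trialityMul ρ x y) x) z := by
  rintro x ⟨a, rfl⟩ y ⟨b, rfl⟩ z -
  have hy : (trialityP σ b)⁻¹ * ρ (trialityP σ b)⁻¹ * ρ (ρ (trialityP σ b)⁻¹) = 1 := by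
    simpa only [inv_trialityP σ hσ] using htri (σ b)
  rw [trialityMul_trialityMul_trialityMul, trialityMul_trialityMul_self_eq ρ hρ (htri a) hy]

/-- In a group with triality `(G, σ, ρ)`, the product `x * y = ρ(x)⁻¹ y ρ²(x)⁻¹` on
`M(G)` satisfies the left Moufang identity `x * (y * (x * z)) = ((x * y) * x) * z`;
hence `(M(G), *)` is a Moufang loop. -/
theorem trialityM_left_moufang {G : Type*} [Group G] (σ ρ : G →* G)
    (hσ : ∀ g, σ (σ g) = g) (hρ : ∀ g, ρ (ρ (ρ g)) = g)
    (hσρ : ∀ g, σ (ρ (σ g)) = ρ (ρ g))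
    (htri : ∀ g, trialityP σ g * ρ (trialityP σ g) * ρ (ρ (trialityP σ g)) = 1) :
    ∀ x ∈ trialityM σ, ∀ y ∈ trialityM σ, ∀ z ∈ trialityM σ,
      trialityMul ρ x (trialityMul ρ y (trialityMul ρ x z)) =
        trialityMul ρ (trialityMul ρ (trialityMul ρ x y) x) z :=
  trialityM_left_moufang_general σ ρ hσ hρ htri
end
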